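/- arXiv:2002.10054 — 3 statements merged into one kernel-verified Lean document; each statement's English description precedes it below -/
import Mathlib

section
/- Define ρ_ε(X,Y) as the infimum of all ε ≥ 0 such that there exist ε-isometries both from X to Y and from Y to X. Then for nonempty compact metric spaces, ρ_ε(X,Y) = 0 implies X and Y are isometric. -/
open Filter Topology Metric Set

set_option maxHeartbeats 1000000

/-- A distance-preserving self-map of a compact metric space is surjective. -/
lemma surjective_of_isometry_compact {X : Type*} [MetricSpace X] [CompactSpace X]
    {i : X → X} (hi : Isometry i) : Function.Surjective i := by
  intro x
  by_contra hx
  have hxr : x ∉ Set.range i := by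
    rintro ⟨y, rfl⟩; exact hx ⟨y, rfl⟩
  have hiter : ∀ n : ℕ, Isometry (i^[n]) := by
    intro n
    induction n with
    | zero => simpa using isometry_id
    | succ n ih => rw [Function.iterate_succ]; exact ih.comp hi
  have hcomp : IsCompact (Set.range i) := isCompact_range hi.continuous
  have hne : (Set.range i).Nonempty := ⟨i x, ⟨x, rfl⟩⟩
  have hpos : 0 < infDist x (Set.range i) :=
    (hcomp.isClosed.notMem_iff_infDist_pos hne).1 hxr
  set ε := infDist x (Set.range i) with hε
  -- the orbit of `x` has pairwise distances at least `ε`, contradicting compactness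
  obtain ⟨l, -, φ, hφ, hconv⟩ :=
    IsCompact.tendsto_subseq (x := fun n => i^[n] x) (isCompact_univ)
      (fun n => Set.mem_univ _)
  have hcauchy : CauchySeq ((fun n => i^[n] x) ∘ φ) := hconv.cauchySeq
  obtain ⟨N, hN⟩ := Metric.cauchySeq_iff'.1 hcauchy ε hpos
  have hlt : dist (i^[φ (N+1)] x) (i^[φ N] x) < ε := hN (N+1) (Nat.le_succ N)
  have hmono : φ N < φ (N + 1) := hφ (Nat.lt_succ_self N)
  have hkey : dist (i^[φ (N+1)] x) (i^[φ N] x) = dist (i^[φ (N+1) - φ N] x) x := by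
    have : i^[φ (N+1)] x = i^[φ N] (i^[φ (N+1) - φ N] x) := by
      rw [← Function.iterate_add_apply, Nat.add_sub_cancel' hmono.le]
    rw [this]
    exact (hiter (φ N)).dist_eq _ _
  have hmem : i^[φ (N+1) - φ N] x ∈ Set.range i := by
    have hpos' : 0 < φ (N+1) - φ N := Nat.sub_pos_of_lt hmono
    obtain ⟨k, hk⟩ := Nat.exists_eq_succ_of_ne_zero hpos'.ne'
    exact ⟨i^[k] x, by rw [hk, Function.iterate_succ_apply']⟩
  have : ε ≤ dist (i^[φ (N+1) - φ N] x) x := by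
    rw [dist_comm]; exact infDist_le_dist_of_mem hmem
  rw [hkey] at hlt
  linarith

/-- From a sequence of `1/(n+1)`-isometries into a compact space, extract a
distance-preserving map, as a cluster point in the product space. -/
lemma exists_distPreserving {X Y : Type*} [MetricSpace X] [MetricSpace Y] [CompactSpace Y]
    [Nonempty Y] (f : ℕ → X → Y)
    (hf : ∀ n a b, |dist a b - dist (f n a) (f n b)| ≤ 1 / (n + 1)) :
    ∃ φ : X → Y, ∀ a b, dist (φ a) (φ b) = dist a b := by
  obtain ⟨φ, hφ⟩ := exists_clusterPt_of_compactSpace (X := X → Y) (map f atTop)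
  refine ⟨φ, fun a b => ?_⟩
  have hcl : MapClusterPt φ atTop f := hφ
  -- evaluate at `(a, b)` and take distances
  have h1 : MapClusterPt (dist (φ a) (φ b)) atTop (fun n => dist (f n a) (f n b)) := by
    have hc : ContinuousAt (fun g : X → Y => dist (g a) (g b)) φ :=
      ((continuous_apply a).dist (continuous_apply b)).continuousAt
    exact hcl.continuousAt_comp hc
  -- the sequence of distances converges to `dist a b`
  have h2 : Tendsto (fun n : ℕ => dist (f n a) (f n b)) atTop (𝓝 (dist a b)) := by
    have hb : ∀ n : ℕ, |dist (f n a) (f n b) - dist a b| ≤ 1 / (n + 1) := by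
      intro n; rw [abs_sub_comm]; exact hf n a b
    have h0 : Tendsto (fun n : ℕ => (1 : ℝ) / (n + 1)) atTop (𝓝 0) :=
      tendsto_one_div_add_atTop_nhds_zero_nat
    have : Tendsto (fun n : ℕ => dist (f n a) (f n b) - dist a b) atTop (𝓝 0) := by
      apply squeeze_zero_norm _ h0
      intro n; simpa using hb n
    simpa using this.add_const (dist a b)
  -- cluster point of a convergent sequence equals the limit
  have : ClusterPt (dist (φ a) (φ b)) (𝓝 (dist a b)) :=
    (mapClusterPt_def.1 h1).mono h2
  exact eq_of_nhds_neBot this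

/-- If `ρ_ε(X,Y) = 0`, where `ρ_ε` is the infimum of all `ε ≥ 0` admitting `ε`-isometries in
both directions, then the nonempty compact metric spaces `X` and `Y` are isometric. -/
theorem isometric_of_rhoEps_eq_zero
    {X Y : Type*} [MetricSpace X] [CompactSpace X] [Nonempty X]
    [MetricSpace Y] [CompactSpace Y] [Nonempty Y]
    (h : sInf {ε : ℝ | 0 ≤ ε ∧
        (∃ f : X → Y, ∀ a b : X, |dist a b - dist (f a) (f b)| ≤ ε) ∧
        (∃ g : Y → X, ∀ a b : Y, |dist a b - dist (g a) (g b)| ≤ ε)} = 0) :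
    Nonempty (X ≃ᵢ Y) := by
  set S : Set ℝ := {ε : ℝ | 0 ≤ ε ∧
      (∃ f : X → Y, ∀ a b : X, |dist a b - dist (f a) (f b)| ≤ ε) ∧
      (∃ g : Y → X, ∀ a b : Y, |dist a b - dist (g a) (g b)| ≤ ε)} with hS
  -- the set is nonempty: constant maps give `(diam X + diam Y)`-isometries
  obtain ⟨x₀⟩ := ‹Nonempty X›
  obtain ⟨y₀⟩ := ‹Nonempty Y›
  have hSne : S.Nonempty := by
    refine ⟨diam (univ : Set X) + diam (univ : Set Y), ?_, ⟨fun _ => y₀, fun a b => ?_⟩,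
      ⟨fun _ => x₀, fun a b => ?_⟩⟩
    · positivity
    · rw [dist_self, sub_zero, abs_of_nonneg dist_nonneg]
      have := dist_le_diam_of_mem (isCompact_univ (X := X)).isBounded
        (mem_univ a) (mem_univ b)
      have := diam_nonneg (s := (univ : Set Y))
      linarith
    · rw [dist_self, sub_zero, abs_of_nonneg dist_nonneg]
      have := dist_le_diam_of_mem (isCompact_univ (X := Y)).isBounded
        (mem_univ a) (mem_univ b)
      have := diam_nonneg (s := (univ : Set X))
      linarith
  have hSbdd : BddBelow S := ⟨0, fun ε hε => hε.1⟩
  -- extract `1/(n+1)`-isometries in both directions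
  have hchoice : ∀ n : ℕ, ∃ (f : X → Y) (g : Y → X),
      (∀ a b : X, |dist a b - dist (f a) (f b)| ≤ 1 / (n + 1)) ∧
      (∀ a b : Y, |dist a b - dist (g a) (g b)| ≤ 1 / (n + 1)) := by
    intro n
    have hpos : (0 : ℝ) < 1 / (n + 1) := by positivity
    obtain ⟨ε, hεS, hεlt⟩ := (csInf_lt_iff hSbdd hSne).1 (h ▸ hpos)
    obtain ⟨-, ⟨f, hf⟩, ⟨g, hg⟩⟩ := hεS
    exact ⟨f, g, fun a b => (hf a b).trans hεlt.le, fun a b => (hg a b).trans hεlt.le⟩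
  choose f g hf hg using hchoice
  obtain ⟨φ, hφ⟩ := exists_distPreserving f hf
  obtain ⟨ψ, hψ⟩ := exists_distPreserving g hg
  -- `ψ ∘ φ` is a distance-preserving self-map of a compact space, hence surjective
  have hψφ : Isometry (ψ ∘ φ) :=
    Isometry.of_dist_eq fun a b => by simp [Function.comp, hψ, hφ]
  have hsurj : Function.Surjective ψ := fun x => by
    obtain ⟨a, ha⟩ := surjective_of_isometry_compact hψφ x
    exact ⟨φ a, ha⟩
  have hinj : Function.Injective ψ := fun a b hab => by
    have := hψ a b
    rw [hab, dist_self] at this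
    exact dist_eq_zero.1 this.symm
  exact ⟨(IsometryEquiv.mk (Equiv.ofBijective ψ ⟨hinj, hsurj⟩)
    (Isometry.of_dist_eq hψ)).symm⟩
end

section
/- If X and Y are compact metric spaces with Lipschitz distance zero, ρ_L(X,Y) = 0, then X and Y are isometric. -/
open scoped NNReal ENNReal

/-- The Lipschitz distance between metric spaces: the infimum over bi-Lipschitz homeomorphisms
`f : X ≃ Y` of `log (max (Dil f) (Dil f⁻¹))`, and `∞` if no bi-Lipschitz homeomorphism exists. -/
noncomputable def lipschitzDist (X Y : Type*) [MetricSpace X] [MetricSpace Y] : ℝ≥0∞ :=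
  sInf {r : ℝ≥0∞ | ∃ (f : X ≃ Y) (K K' : ℝ≥0), LipschitzWith K f ∧ LipschitzWith K' f.symm ∧
    r = ENNReal.ofReal (Real.log (max (K : ℝ) (K' : ℝ)))}

/-- Compact metric spaces at Lipschitz distance zero are isometric. -/
theorem isometric_of_lipschitzDist_eq_zero
    {X Y : Type*} [MetricSpace X] [CompactSpace X] [Nonempty X]
    [MetricSpace Y] [CompactSpace Y] [Nonempty Y]
    (h : lipschitzDist X Y = 0) :
    Nonempty (X ≃ᵢ Y) := by
  set D := Metric.diam (Set.univ : Set X) with hD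
  have hD0 : 0 ≤ D := Metric.diam_nonneg
  -- key step: the Gromov–Hausdorff distance is at most any positive ε
  have main : ∀ ε : ℝ, 0 < ε → GromovHausdorff.ghDist X Y ≤ 0 + ε := by
    intro ε hε
    set ε' : ℝ := ε / (D + 1) with hε'
    have hε'0 : 0 < ε' := div_pos hε (by linarith)
    set δ : ℝ := Real.log (1 + ε') / 2 with hδ
    have hδ0 : 0 < δ := by
      apply div_pos _ (by norm_num)
      exact Real.log_pos (by linarith)
    -- extract a bi-Lipschitz equivalence with small dilation
    have hlt : lipschitzDist X Y < ENNReal.ofReal δ := by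
      rw [h]; exact ENNReal.ofReal_pos.2 hδ0
    obtain ⟨r, hr, hrlt⟩ := sInf_lt_iff.1 (by unfold lipschitzDist at hlt; exact hlt)
    obtain ⟨f, K, K', hK, hK', rfl⟩ := hr
    have hlog : Real.log (max (K : ℝ) (K' : ℝ)) < δ := by
      by_contra hcon
      push_neg at hcon
      exact absurd hrlt (not_lt.2 (ENNReal.ofReal_le_ofReal hcon))
    set L : ℝ := Real.exp δ with hL
    have hL1 : 1 ≤ L := Real.one_le_exp hδ0.le
    have hmL : (max (K : ℝ) (K' : ℝ)) ≤ L := by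
      rcases lt_or_ge 0 (max (K : ℝ) (K' : ℝ)) with hm | hm
      · exact le_of_lt ((Real.log_lt_iff_lt_exp hm).1 hlog)
      · exact hm.trans (by positivity)
    have hKL : (K : ℝ) ≤ L := (le_max_left _ _).trans hmL
    have hK'L : (K' : ℝ) ≤ L := (le_max_right _ _).trans hmL
    -- bounds on distortion of distances
    have key : ∀ a b : X, |dist a b - dist (f a) (f b)| ≤ (L * L - 1) * D := by
      intro a b
      have h1 : dist (f a) (f b) ≤ L * dist a b :=
        (hK.dist_le_mul a b).trans (mul_le_mul_of_nonneg_right hKL dist_nonneg)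
      have h2 : dist a b ≤ L * dist (f a) (f b) := by
        have := hK'.dist_le_mul (f a) (f b)
        simp only [Equiv.symm_apply_apply] at this
        exact this.trans (mul_le_mul_of_nonneg_right hK'L dist_nonneg)
      have h3 : dist a b ≤ D := Metric.dist_le_diam_of_mem
        (Metric.isBounded_of_compactSpace) (Set.mem_univ a) (Set.mem_univ b)
      have h4 : (0:ℝ) ≤ dist a b := dist_nonneg
      have h5 : (0:ℝ) ≤ dist (f a) (f b) := dist_nonneg
      have hd' : dist (f a) (f b) ≤ L * D :=
        h1.trans (mul_le_mul_of_nonneg_left h3 (by linarith))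
      rw [abs_le]
      constructor
      · nlinarith [mul_le_mul_of_nonneg_left h3 (by linarith : (0:ℝ) ≤ L - 1)]
      · nlinarith [mul_le_mul_of_nonneg_left hd' (by linarith : (0:ℝ) ≤ L - 1),
          mul_le_mul_of_nonneg_right (by nlinarith : L * L - L ≤ L * L - 1) hD0]
    -- apply the GH bound with the whole space and map `f`
    have hgh : GromovHausdorff.ghDist X Y ≤ 0 + ((L * L - 1) * D) / 2 + 0 := by
      apply GromovHausdorff.ghDist_le_of_approx_subsets
        (fun x : (Set.univ : Set X) => f x)
      · intro x; exact ⟨x, Set.mem_univ x, by simp⟩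
      · intro y; exact ⟨⟨f.symm y, Set.mem_univ _⟩, by simp⟩
      · intro x y
        have := key x y
        simpa [Subtype.dist_eq] using this
    have hLL : L * L = 1 + ε' := by
      rw [hL, ← Real.exp_add]
      rw [hδ]
      rw [show Real.log (1 + ε') / 2 + Real.log (1 + ε') / 2 = Real.log (1 + ε') by ring]
      exact Real.exp_log (by linarith)
    calc GromovHausdorff.ghDist X Y ≤ 0 + ((L * L - 1) * D) / 2 + 0 := hgh
      _ = ε' * D / 2 := by rw [hLL]; ring
      _ ≤ ε := by
          rw [hε', div_mul_eq_mul_div, div_div]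
          rw [div_le_iff₀ (by positivity)]
          nlinarith
      _ = 0 + ε := by ring
  have hle : GromovHausdorff.ghDist X Y ≤ 0 := le_of_forall_pos_le_add main
  have hge : 0 ≤ GromovHausdorff.ghDist X Y := by
    rw [GromovHausdorff.ghDist]; exact dist_nonneg
  have h0 : dist (GromovHausdorff.toGHSpace X) (GromovHausdorff.toGHSpace Y) = 0 :=
    le_antisymm hle hge
  exact GromovHausdorff.toGHSpace_eq_toGHSpace_iff_isometryEquiv.1 (dist_eq_zero.1 h0)
end

section
/- Let (X, d₁) and (X, d₂) be two metric structures on the same compact topological space, and define ρ_SL(d₁, d₂) := inf{log k : k ≥ 1 and there exists a homeomorphism f : X → X with d₁(x,y)/k ≤ d₂(f(x),f(y)) ≤ k·d₁(x,y) for all x,y}. Then ρ_SL(d₁, d₂) = 0 implies (X, d₁) is isometric to (X, d₂). -/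
open Filter Topology Metric Set

/-- An isometric self-map of a compact metric space is surjective. -/
lemma surjective_of_isometry_compact_s15 {X : Type*} [MetricSpace X] [CompactSpace X]
    (e : X → X) (he : ∀ x y, dist (e x) (e y) = dist x y) : Function.Surjective e := by
  have hiso : Isometry e := Isometry.of_dist_eq he
  intro a
  by_contra ha
  push_neg at ha
  have hane : a ∉ range e := by rintro ⟨y, rfl⟩; exact ha y rfl
  have hclosed : IsClosed (range e) := (isCompact_range hiso.continuous).isClosed
  have hpos : 0 < Metric.infDist a (range e) :=
    (hclosed.notMem_iff_infDist_pos ⟨e a, mem_range_self a⟩).mp hane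
  set ε := Metric.infDist a (range e) with hε
  -- iterates preserve distance
  have hiter : ∀ n : ℕ, ∀ x y : X, dist (e^[n] x) (e^[n] y) = dist x y := by
    intro n
    induction n with
    | zero => simp
    | succ n ih =>
      intro x y
      rw [Function.iterate_succ_apply, Function.iterate_succ_apply, ih, he]
  have hfar : ∀ m n : ℕ, m < n → ε ≤ dist (e^[m] a) (e^[n] a) := by
    intro m n hmn
    have hsub : e^[n] a = e^[m] (e^[n - m] a) := by
      rw [← Function.iterate_add_apply]
      congr 1
      omega
    rw [hsub, hiter m]
    have hmem : e^[n - m] a ∈ range e := by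
      have : 1 ≤ n - m := by omega
      obtain ⟨p, hp⟩ : ∃ p, n - m = p + 1 := ⟨n - m - 1, by omega⟩
      rw [hp, Function.iterate_succ_apply']
      exact mem_range_self _
    exact Metric.infDist_le_dist_of_mem hmem
  obtain ⟨b, -, φ, hφ, hconv⟩ :=
    isCompact_univ.tendsto_subseq (x := fun n => e^[n] a) (fun n => mem_univ _)
  have hcauchy : CauchySeq (fun n => e^[φ n] a) := hconv.cauchySeq
  obtain ⟨N, hN⟩ := Metric.cauchySeq_iff.mp hcauchy ε hpos
  have h1 := hN (N + 1) (by omega) N (by omega)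
  have h2 := hfar (φ N) (φ (N + 1)) (hφ (by omega))
  rw [dist_comm] at h1
  linarith

/-- If two compatible metrics `d₁`, `d₂` on a compact topological space satisfy
`ρ_SL(d₁, d₂) = 0` (i.e. for every `ε > 0` there is a homeomorphism `f` and `k ≥ 1` with
`log k < ε` and `d₁(x,y)/k ≤ d₂(f x, f y) ≤ k d₁(x,y)`), then `(X, d₁)` is isometric to
`(X, d₂)`. -/
theorem isometric_of_rhoSL_eq_zero
    {X : Type*} (m₁ m₂ : MetricSpace X)
    (htop : m₁.toUniformSpace.toTopologicalSpace = m₂.toUniformSpace.toTopologicalSpace)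
    (hcompact : @CompactSpace X m₁.toUniformSpace.toTopologicalSpace)
    (h : ∀ ε : ℝ, 0 < ε → ∃ (k : ℝ) (f : X → X), 1 ≤ k ∧ Real.log k < ε ∧
      Function.Bijective f ∧
      ∀ x y : X, @dist X m₁.toDist x y / k ≤ @dist X m₂.toDist (f x) (f y) ∧
        @dist X m₂.toDist (f x) (f y) ≤ k * @dist X m₁.toDist x y) :
    ∃ f : X → X, Function.Bijective f ∧
      ∀ x y : X, @dist X m₂.toDist (f x) (f y) = @dist X m₁.toDist x y := by
  classical
  letI := m₂
  haveI hc2 : CompactSpace X := htop ▸ hcompact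
  by_cases hne : Nonempty X
  · -- notation for the first metric
    set d₁ : X → X → ℝ := fun x y => @dist X m₁.toDist x y with hd₁
    -- pick homeomorphisms with constants k n, log (k n) < 1/(n+1)
    have H : ∀ n : ℕ, ∃ (k : ℝ) (f : X → X), 1 ≤ k ∧ Real.log k < 1 / (n + 1) ∧
        Function.Bijective f ∧
        ∀ x y : X, d₁ x y / k ≤ dist (f x) (f y) ∧ dist (f x) (f y) ≤ k * d₁ x y :=
      fun n => h (1 / (n + 1)) (by positivity)
    choose k f hk hlog hbij hd using H
    -- k n → 1
    have hk1 : Tendsto k atTop (𝓝 1) := by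
      have hub : ∀ n, k n ≤ Real.exp (1 / (n + 1)) := by
        intro n
        have h0 : k n = Real.exp (Real.log (k n)) := (Real.exp_log (by linarith [hk n])).symm
        rw [h0]
        exact le_of_lt (Real.exp_lt_exp.mpr (hlog n))
      have hexp : Tendsto (fun n : ℕ => Real.exp (1 / (n + 1))) atTop (𝓝 1) := by
        have h0 : Tendsto (fun n : ℕ => 1 / ((n : ℝ) + 1)) atTop (𝓝 0) :=
          tendsto_one_div_add_atTop_nhds_zero_nat
        simpa [Function.comp_def] using (Real.continuous_exp.tendsto 0).comp h0
      exact tendsto_of_tendsto_of_tendsto_of_le_of_le tendsto_const_nhds hexp hk hub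
    -- ultrafilter extending atTop
    haveI : (atTop : Filter ℕ).NeBot := atTop_neBot
    set U : Ultrafilter ℕ := Ultrafilter.of atTop with hUdef
    have hU : (U : Filter ℕ) ≤ atTop := Ultrafilter.of_le _
    have hkU : Tendsto k (U : Filter ℕ) (𝓝 1) := hk1.mono_left hU
    -- limits along the ultrafilter exist by compactness
    have hlim : ∀ g : ℕ → X, ∃ y : X, Tendsto g (U : Filter ℕ) (𝓝 y) := by
      intro g
      obtain ⟨y, -, hy⟩ := isCompact_univ.ultrafilter_le_nhds (U.map g)
        (by simp [Filter.le_principal_iff])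
      refine ⟨y, ?_⟩
      rwa [Ultrafilter.coe_map] at hy
    -- continuity of d₁ w.r.t. the (common) topology
    have hcont1 : Continuous (fun p : X × X => d₁ p.1 p.2) := by
      have := @continuous_dist X m₁.toPseudoMetricSpace
      exact htop ▸ this
    -- squeeze lemma: if D n is pinched between d/k n and k n * d along U and tends to L, L = d
    have squeeze : ∀ (D : ℕ → ℝ) (L c : ℝ), Tendsto D (U : Filter ℕ) (𝓝 L) →
        (∀ n, c / k n ≤ D n) → (∀ n, D n ≤ k n * c) → L = c := by
      intro D L c hD hlow hhigh
      have h1 : Tendsto (fun n => c / k n) (U : Filter ℕ) (𝓝 c) := by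
        simpa [Pi.div_def] using (tendsto_const_nhds (x := c)).div hkU one_ne_zero
      have h2 : Tendsto (fun n => k n * c) (U : Filter ℕ) (𝓝 c) := by
        simpa using hkU.mul (tendsto_const_nhds (x := c))
      have hge := le_of_tendsto_of_tendsto' h1 hD hlow
      have hle := le_of_tendsto_of_tendsto' hD h2 hhigh
      linarith
    -- the limit map F
    choose F hF using fun x => hlim (fun n => f n x)
    have hisoF : ∀ x y, dist (F x) (F y) = d₁ x y := by
      intro x y
      refine squeeze (fun n => dist (f n x) (f n y)) _ _ ((hF x).dist (hF y))
        (fun n => (hd n x y).1) (fun n => (hd n x y).2)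
    -- inverse maps and their limit G
    set g : ℕ → X → X := fun n => (Equiv.ofBijective (f n) (hbij n)).symm with hgdef
    have hfg : ∀ n x, f n (g n x) = x := fun n x =>
      (Equiv.ofBijective (f n) (hbij n)).apply_symm_apply x
    choose G hG using fun x => hlim (fun n => g n x)
    have hisoG : ∀ x y, d₁ (G x) (G y) = dist x y := by
      intro x y
      have hDt : Tendsto (fun n => d₁ (g n x) (g n y)) (U : Filter ℕ)
          (𝓝 (d₁ (G x) (G y))) :=
        (hcont1.tendsto _).comp ((hG x).prodMk_nhds (hG y))
      refine squeeze _ _ _ hDt (fun n => ?_) (fun n => ?_)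
      · have := (hd n (g n x) (g n y)).2
        rw [hfg, hfg] at this
        rw [div_le_iff₀ (by linarith [hk n])]
        calc dist x y ≤ k n * d₁ (g n x) (g n y) := this
          _ = d₁ (g n x) (g n y) * k n := mul_comm _ _
      · have := (hd n (g n x) (g n y)).1
        rw [hfg, hfg] at this
        rw [div_le_iff₀ (by linarith [hk n])] at this
        linarith [this]
    -- F ∘ G is an isometry of (X, d₂), hence surjective
    have hFG : ∀ x y, dist (F (G x)) (F (G y)) = dist x y := by
      intro x y; rw [hisoF, hisoG]
    have hsurjFG : Function.Surjective (F ∘ G) :=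
      surjective_of_isometry_compact_s15 (F ∘ G) hFG
    have hsurjF : Function.Surjective F := hsurjFG.of_comp
    have hinjF : Function.Injective F := by
      intro x y hxy
      have : d₁ x y = 0 := by rw [← hisoF, hxy, dist_self]
      have := @dist_eq_zero X m₁ x y
      rw [hd₁] at *
      exact this.mp ‹_›
    exact ⟨F, ⟨hinjF, hsurjF⟩, hisoF⟩
  · refine ⟨id, Function.bijective_id, fun x y => absurd ⟨x⟩ hne⟩
end
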